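/- arXiv:1807.01883 — 3 statements merged into one kernel-verified Lean document; each statement's English description precedes it below -/
import Mathlib

section
/- For ℓ = 2, a level-2 segment I^(2)_j belongs to IL(I^(2)_i) if and only if d_2(i,j) = 2. For every ℓ ≥ 3, if a level-ℓ segment I^(ℓ)_j belongs to IL(I^(ℓ)_i), then 2 ≤ d_ℓ(i,j) ≤ 3. Consequently the matrix M^(ℓ) whose (i,j) block is nonzero only when I^(ℓ)_j ∈ IL(I^(ℓ)_i) is a block cyclic band matrix with band size n_b^(ℓ) = 2 for ℓ = 2 and n_b^(ℓ) = 3 for ℓ ≥ 3. -/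
lemma key_stmt4 (m p q a b ei ej : ℤ) (hm : 2 ≤ m) (hc : (p - q) % m ≤ 1)
    (hei0 : 0 ≤ ei) (hei1 : ei ≤ 1) (hej0 : 0 ≤ ej) (hej1 : ej ≤ 1)
    (ha : a = 2*p - 1 + ei - (2*q - 1 + ej)) (hb : b = -a) :
    min (a % (2*m)) (b % (2*m)) ≤ 3 := by
  set c := (p - q) % m with hcdef
  set k := (p - q) / m with hkdef
  have hc0 : 0 ≤ c := Int.emod_nonneg _ (by omega)
  have hk : p - q = m * k + c := (Int.mul_ediv_add_emod (p - q) m).symm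
  set s := 2*c + (ei - ej) with hsdef
  have has : a = s + 2*m*k := by linear_combination ha + 2*hk
  by_cases hs : 0 ≤ s
  · have h1 : a % (2*m) = s := by
      calc a % (2*m) = (s + 2*m*k) % (2*m) := by rw [has]
        _ = s % (2*m) := Int.add_mul_emod_self_left s (2*m) k
        _ = s := Int.emod_eq_of_lt hs (by omega)
    omega
  · have hs1 : s = -1 := by omega
    have hbeq : b = 1 + 2*m*(-k) := by rw [hb, has, hs1]; ring
    have h1 : b % (2*m) = 1 := by
      calc b % (2*m) = (1 + 2*m*(-k)) % (2*m) := by rw [hbeq]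
        _ = 1 % (2*m) := Int.add_mul_emod_self_left 1 (2*m) (-k)
        _ = 1 := Int.emod_eq_of_lt (by norm_num) (by omega)
    omega

/-- For `ℓ = 2`: `j ∈ IL(I_i) ↔ d_2(i,j) = 2`. For `ℓ ≥ 3`: `j ∈ IL(I_i) → 2 ≤ d_ℓ(i,j) ≤ 3`.
Consequently a block matrix `M^(ℓ)` whose `(i,j)` block is nonzero only when `j ∈ IL(I_i)` is
block cyclic band with band size `2` for `ℓ = 2` and `3` for `ℓ ≥ 3`. -/
theorem stmt_4 (r : ℕ)
    (d : ℕ → ℤ → ℤ → ℤ)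
    (hd : ∀ l i j, d l i j = min ((i - j) % 2 ^ l) ((j - i) % 2 ^ l))
    (NL : ℕ → ℤ → ℤ → Prop)
    (hNL : ∀ l i j, NL l i j ↔ d l i j ≤ 1)
    (IL : ℕ → ℤ → ℤ → Prop)
    (hIL2 : ∀ i j, IL 2 i j ↔ (1 ≤ j ∧ j ≤ 2 ^ 2 ∧ ¬ NL 2 i j))
    (hILl : ∀ l, 3 ≤ l → ∀ i j, IL l i j ↔
      (1 ≤ j ∧ j ≤ 2 ^ l ∧ NL (l - 1) ((i + 1) / 2) ((j + 1) / 2) ∧ ¬ NL l i j)) :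
    (∀ i j : ℤ, 1 ≤ i → i ≤ 2 ^ 2 → 1 ≤ j → j ≤ 2 ^ 2 → (IL 2 i j ↔ d 2 i j = 2)) ∧
    (∀ l, 3 ≤ l → ∀ i j : ℤ, 1 ≤ i → i ≤ 2 ^ l → 1 ≤ j → j ≤ 2 ^ l →
      IL l i j → 2 ≤ d l i j ∧ d l i j ≤ 3) ∧
    (∀ l, 2 ≤ l → ∀ M : ℤ → ℤ → Matrix (Fin r) (Fin r) ℝ,
      (∀ i j : ℤ, 1 ≤ i → i ≤ 2 ^ l → 1 ≤ j → j ≤ 2 ^ l → ¬ IL l i j → M i j = 0) →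
      ∀ i j : ℤ, 1 ≤ i → i ≤ 2 ^ l → 1 ≤ j → j ≤ 2 ^ l →
        (if l = 2 then (2 : ℤ) else 3) < d l i j → M i j = 0) := by
  have part1 : ∀ i j : ℤ, 1 ≤ i → i ≤ 2 ^ 2 → 1 ≤ j → j ≤ 2 ^ 2 →
      (IL 2 i j ↔ d 2 i j = 2) := by
    intro i j hi1 hi2 hj1 hj2
    rw [hIL2, hNL, hd]
    norm_num at hi2 hj2 ⊢
    interval_cases i <;> interval_cases j <;> simp
  have part2 : ∀ l, 3 ≤ l → ∀ i j : ℤ, 1 ≤ i → i ≤ 2 ^ l → 1 ≤ j → j ≤ 2 ^ l →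
      IL l i j → 2 ≤ d l i j ∧ d l i j ≤ 3 := by
    intro l hl i j hi1 hi2 hj1 hj2 hil
    rw [hILl l hl] at hil
    obtain ⟨-, -, hpar, hnot⟩ := hil
    rw [hNL, hd] at hpar
    rw [hNL, hd] at hnot
    rw [hd]
    set m : ℤ := 2 ^ (l - 1) with hm
    have hm2 : (4 : ℤ) ≤ m := by
      calc (4:ℤ) = 2 ^ 2 := by norm_num
        _ ≤ 2 ^ (l - 1) := pow_le_pow_right₀ (by norm_num) (by omega)
    have h2l : (2:ℤ) ^ l = 2 * m := by
      rw [show l = (l-1) + 1 by omega, pow_succ, ← hm]; ring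
    rw [h2l] at hnot ⊢
    have hA : 0 ≤ (i - j) % (2*m) := Int.emod_nonneg _ (by omega)
    have hB : 0 ≤ (j - i) % (2*m) := Int.emod_nonneg _ (by omega)
    constructor
    · omega
    · -- parent indices
      set p : ℤ := (i + 1) / 2 with hp
      set q : ℤ := (j + 1) / 2 with hq
      obtain ⟨ei, hei0, hei1, hpi⟩ : ∃ e, 0 ≤ e ∧ e ≤ 1 ∧ i = 2*p - 1 + e :=
        ⟨(i+1) % 2, by omega, by omega, by omega⟩
      obtain ⟨ej, hej0, hej1, hpj⟩ : ∃ e, 0 ≤ e ∧ e ≤ 1 ∧ j = 2*q - 1 + e :=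
        ⟨(j+1) % 2, by omega, by omega, by omega⟩
      have hPA : 0 ≤ (p - q) % m := Int.emod_nonneg _ (by omega)
      have hPB : 0 ≤ (q - p) % m := Int.emod_nonneg _ (by omega)
      rcases (by omega : (p - q) % m ≤ 1 ∨ (q - p) % m ≤ 1) with h | h
      · exact key_stmt4 m p q (i - j) (j - i) ei ej (by omega) h hei0 hei1 hej0 hej1
          (by omega) (by ring)
      · have := key_stmt4 m q p (j - i) (i - j) ej ei (by omega) h hej0 hej1 hei0 hei1
          (by omega) (by ring)
        omega
  refine ⟨part1, part2, ?_⟩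
  intro l hl M hM i j hi1 hi2 hj1 hj2 hband
  apply hM i j hi1 hi2 hj1 hj2
  rcases eq_or_lt_of_le hl with hleq | hlgt
  · subst hleq
    simp only [if_pos rfl] at hband
    rw [part1 i j hi1 hi2 hj1 hj2]
    omega
  · have hl3 : 3 ≤ l := hlgt
    rw [if_neg (by omega)] at hband
    intro hil
    have := part2 l hl3 i j hi1 hi2 hj1 hj2 hil
    omega
end

section
/- Let L ≥ 2, m ≥ 1, and r be integers with 1 ≤ r ≤ m, set N = 2^L·m, and let n_b^(2), …, n_b^(L) and n_b^(ad) be nonnegative integers all bounded by a nonnegative integer n_b. Then the total number of weight parameters of the neural-network representation of an H-matrix, N_p^H = Σ_{ℓ=2}^{L} ( N·r + 2^ℓ·r²·(2·n_b^(ℓ)+1) + 2^ℓ·r·(N/2^ℓ) ) + 2^L·m²·(2·n_b^(ad)+1), satisfies N_p^H ≤ 2·L·N·r + 2^{L+1}·r²·(2·n_b+1) + N·m·(2·n_b^(ad)+1) ≤ 2·N·log₂(N)·r + 3·N·m·(2·n_b+1). -/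
/-!
Since `2 ^ ℓ * (N / 2 ^ ℓ) ≤ N`, level `ℓ` contributes at most
`2 N r + 2 ^ ℓ r² (2 n_b + 1)`, and the geometric sum of the `2 ^ ℓ` stays below `2 ^ (L + 1)`;
the adjacent part is exactly `N m (2 n_b^(ad) + 1)` because `N = 2 ^ L m`. For the second bound,
`L ≤ log₂ N` as `m ≥ 1`, and `2 ^ (L + 1) r² ≤ 2 N m` as `r ≤ m`.
-/

open Finset

lemma mul_div_two_pow_le (l r N : ℕ) : 2 ^ l * r * (N / 2 ^ l) ≤ N * r :=
  calc 2 ^ l * r * (N / 2 ^ l) = N / 2 ^ l * 2 ^ l * r := by ring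
    _ ≤ N * r := Nat.mul_le_mul_right r (Nat.div_mul_le_self N _)

lemma level_params_le (l N r nb nbmax : ℕ) (hnb : nb ≤ nbmax) :
    N * r + 2 ^ l * r ^ 2 * (2 * nb + 1) + 2 ^ l * r * (N / 2 ^ l)
      ≤ 2 * (N * r) + 2 ^ l * (r ^ 2 * (2 * nbmax + 1)) := by
  have hinterp := mul_div_two_pow_le l r N
  have hkernel : 2 ^ l * r ^ 2 * (2 * nb + 1) ≤ 2 ^ l * r ^ 2 * (2 * nbmax + 1) := by gcongr
  linarith

lemma sum_level_params_le {a : ℕ} (L N r nbmax : ℕ) (nb : ℕ → ℕ) (ha : 1 ≤ a)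
    (hnb : ∀ l ∈ Icc a L, nb l ≤ nbmax) :
    ∑ l ∈ Icc a L, (N * r + 2 ^ l * r ^ 2 * (2 * nb l + 1) + 2 ^ l * r * (N / 2 ^ l))
      ≤ 2 * L * N * r + 2 ^ (L + 1) * r ^ 2 * (2 * nbmax + 1) := by
  have hcard : #(Icc a L) ≤ L := by rw [Nat.card_Icc]; omega
  calc _ ≤ ∑ l ∈ Icc a L, (2 * (N * r) + 2 ^ l * (r ^ 2 * (2 * nbmax + 1))) :=
        sum_le_sum fun l hl => level_params_le l N r (nb l) nbmax (hnb l hl)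
    _ = #(Icc a L) * (2 * (N * r)) + (∑ l ∈ Icc a L, 2 ^ l) * (r ^ 2 * (2 * nbmax + 1)) := by
        rw [sum_add_distrib, sum_const, smul_eq_mul, sum_mul]
    _ ≤ L * (2 * (N * r)) + 2 ^ (L + 1) * (r ^ 2 * (2 * nbmax + 1)) := by
        gcongr
        exact (Nat.geomSum_lt le_rfl fun l hl => Nat.lt_succ_of_le (mem_Icc.1 hl).2).le
    _ = 2 * L * N * r + 2 ^ (L + 1) * r ^ 2 * (2 * nbmax + 1) := by ring

lemma low_rank_and_adjacent_params_le (L m r nbad nbmax : ℕ) (hrm : r ≤ m)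
    (hnbad : nbad ≤ nbmax) :
    2 ^ (L + 1) * r ^ 2 * (2 * nbmax + 1) + 2 ^ L * m * m * (2 * nbad + 1)
      ≤ 3 * (2 ^ L * m) * m * (2 * nbmax + 1) := by
  calc _ ≤ 2 ^ (L + 1) * m ^ 2 * (2 * nbmax + 1) + 2 ^ L * m * m * (2 * nbmax + 1) := by
        gcongr
    _ = 3 * (2 ^ L * m) * m * (2 * nbmax + 1) := by ring

lemma natCast_le_logb_two_pow_mul (L : ℕ) {m : ℝ} (hm : 1 ≤ m) :
    (L : ℝ) ≤ Real.logb 2 (2 ^ L * m) := by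
  rw [Real.logb_mul (by positivity) (by positivity), Real.logb_pow,
    Real.logb_self_eq_one one_lt_two, mul_one]
  linarith [Real.logb_nonneg one_lt_two hm]

theorem stmt_8_general (L m r : ℕ) (hm : 1 ≤ m) (hrm : r ≤ m)
    (N : ℕ) (hN : N = 2 ^ L * m)
    (nb : ℕ → ℕ) (nbad nbmax : ℕ)
    (hnb : ∀ l, 2 ≤ l → l ≤ L → nb l ≤ nbmax) (hnbad : nbad ≤ nbmax)
    (Np : ℕ)
    (hNp : Np = (∑ l ∈ Finset.Icc 2 L,
        (N * r + 2 ^ l * r ^ 2 * (2 * nb l + 1) + 2 ^ l * r * (N / 2 ^ l)))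
      + 2 ^ L * m ^ 2 * (2 * nbad + 1)) :
    Np ≤ 2 * L * N * r + 2 ^ (L + 1) * r ^ 2 * (2 * nbmax + 1) + N * m * (2 * nbad + 1) ∧
    ((2 * L * N * r + 2 ^ (L + 1) * r ^ 2 * (2 * nbmax + 1) + N * m * (2 * nbad + 1) : ℝ)
      ≤ 2 * N * Real.logb 2 N * r + 3 * N * m * (2 * nbmax + 1)) := by
  subst hN hNp
  constructor
  · rw [show 2 ^ L * m ^ 2 = 2 ^ L * m * m by ring]
    refine Nat.add_le_add_right (sum_level_params_le L _ r nbmax nb one_le_two fun l hl => ?_) _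
    exact hnb l (mem_Icc.1 hl).1 (mem_Icc.1 hl).2
  · have hrest :=
      (Nat.cast_le (α := ℝ)).2 (low_rank_and_adjacent_params_le L m r nbad nbmax hrm hnbad)
    have hlog := natCast_le_logb_two_pow_mul L (m := m) (by exact_mod_cast hm)
    push_cast at hrest ⊢
    have hlevels : 2 * (2 ^ L * m) * (L : ℝ) * r ≤ 2 * (2 ^ L * m) * Real.logb 2 (2 ^ L * m) * r := by
      gcongr 2 * _ * ?_ * _
    linarith

/-- Parameter count of the neural-network representation of an `H`-matrix:
`N_p^H = Σ_{ℓ=2}^{L} (N·r + 2^ℓ·r²·(2n_b^(ℓ)+1) + 2^ℓ·r·(N/2^ℓ)) + 2^L·m²·(2n_b^(ad)+1)`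
satisfies
`N_p^H ≤ 2LNr + 2^{L+1}r²(2n_b+1) + Nm(2n_b^(ad)+1) ≤ 2N·log₂(N)·r + 3Nm(2n_b+1)`. -/
theorem stmt_8 (L m r : ℕ) (hL : 2 ≤ L) (hm : 1 ≤ m) (hr : 1 ≤ r) (hrm : r ≤ m)
    (N : ℕ) (hN : N = 2 ^ L * m)
    (nb : ℕ → ℕ) (nbad nbmax : ℕ)
    (hnb : ∀ l, 2 ≤ l → l ≤ L → nb l ≤ nbmax) (hnbad : nbad ≤ nbmax)
    (Np : ℕ)
    (hNp : Np = (∑ l ∈ Finset.Icc 2 L,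
        (N * r + 2 ^ l * r ^ 2 * (2 * nb l + 1) + 2 ^ l * r * (N / 2 ^ l)))
      + 2 ^ L * m ^ 2 * (2 * nbad + 1)) :
    Np ≤ 2 * L * N * r + 2 ^ (L + 1) * r ^ 2 * (2 * nbmax + 1) + N * m * (2 * nbad + 1) ∧
    ((2 * L * N * r + 2 ^ (L + 1) * r ^ 2 * (2 * nbmax + 1) + N * m * (2 * nbad + 1) : ℝ)
      ≤ 2 * N * Real.logb 2 N * r + 3 * N * m * (2 * nbmax + 1)) :=
  stmt_8_general L m r hm hrm N hN nb nbad nbmax hnb hnbad Np hNp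
end

section
/- Let L ≥ 2, m ≥ 1, r, and K ≥ 1 be integers with 1 ≤ r ≤ m, set N = 2^L·m, and let n_b^(2), …, n_b^(L) and n_b^(ad) be nonnegative integers all bounded by a nonnegative integer n_b. Then the total number of weight parameters of the multiscale neural network, N_p^MNN = Σ_{ℓ=2}^{L} ( N·r + K·2^ℓ·r²·(2·n_b^(ℓ)+1) + 2^ℓ·r·(N/2^ℓ) ) + K·2^L·m²·(2·n_b^(ad)+1), satisfies N_p^MNN ≤ 2·L·N·r + K·2^{L+1}·r²·(2·n_b+1) + N·K·m·(2·n_b^(ad)+1) ≤ 2·N·log₂(N)·r + 3·N·K·m·(2·n_b+1). -/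
/-!
At level `ℓ` the interpolation network has exactly `N·r` weights because `2^ℓ ∣ N`, so restriction
and interpolation contribute at most `2·L·N·r`; the kernel networks grow like `2^ℓ`, and the
geometric sum `∑_{ℓ ≤ L} 2^ℓ < 2^{L+1}` bounds them by their value at `2^{L+1}`. The adjacent part
is exactly `N·K·m·(2n_b^(ad)+1)` since `N = 2^L·m`. For the second inequality, `L ≤ log₂ N` because
`N ≥ 2^L`, and `r ≤ m` gives `2^{L+1}·r² ≤ 2·N·m`.
-/

open Finset Real

lemma sum_Icc_mul_div_pow_eq {N L : ℕ} (hN : 2 ^ L ∣ N) (a r : ℕ) :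
    ∑ l ∈ Icc a L, 2 ^ l * r * (N / 2 ^ l) = (L + 1 - a) * (N * r) := by
  rw [← Nat.card_Icc, ← smul_eq_mul, ← sum_const]
  refine sum_congr rfl fun l hl => ?_
  have hdvd : 2 ^ l ∣ N := (pow_dvd_pow 2 (mem_Icc.1 hl).2).trans hN
  rw [mul_right_comm, Nat.mul_div_cancel' hdvd, mul_comm]

lemma sum_Icc_kernel_weights_le (K r L nbmax : ℕ) (nb : ℕ → ℕ)
    (hnb : ∀ l, 2 ≤ l → l ≤ L → nb l ≤ nbmax) :
    ∑ l ∈ Icc 2 L, K * 2 ^ l * r ^ 2 * (2 * nb l + 1) ≤ K * 2 ^ (L + 1) * r ^ 2 * (2 * nbmax + 1) :=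
  calc ∑ l ∈ Icc 2 L, K * 2 ^ l * r ^ 2 * (2 * nb l + 1)
      ≤ ∑ l ∈ Icc 2 L, K * r ^ 2 * (2 * nbmax + 1) * 2 ^ l := by
        refine sum_le_sum fun l hl => ?_
        obtain ⟨hl2, hlL⟩ := mem_Icc.1 hl
        have := hnb l hl2 hlL
        calc K * 2 ^ l * r ^ 2 * (2 * nb l + 1) = K * r ^ 2 * 2 ^ l * (2 * nb l + 1) := by ring
          _ ≤ K * r ^ 2 * 2 ^ l * (2 * nbmax + 1) := by gcongr
          _ = K * r ^ 2 * (2 * nbmax + 1) * 2 ^ l := by ring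
    _ = K * r ^ 2 * (2 * nbmax + 1) * ∑ l ∈ Icc 2 L, 2 ^ l := by rw [mul_sum]
    _ ≤ K * r ^ 2 * (2 * nbmax + 1) * 2 ^ (L + 1) := by
        gcongr
        exact (Nat.geomSum_lt le_rfl fun l hl => Nat.lt_succ_of_le (mem_Icc.1 hl).2).le
    _ = K * 2 ^ (L + 1) * r ^ 2 * (2 * nbmax + 1) := by ring

lemma le_logb_pow_mul {b : ℝ} (hb : 1 < b) (L : ℕ) {x : ℝ} (hx : 1 ≤ x) :
    (L : ℝ) ≤ logb b (b ^ L * x) := by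
  have hb0 : b ≠ 0 := by positivity
  rw [logb_mul (pow_ne_zero L hb0) (by positivity), logb_pow, logb_self_eq_one hb, mul_one]
  linarith [logb_nonneg hb hx]

theorem stmt_9_general (L m r K : ℕ) (hm : 1 ≤ m) (hrm : r ≤ m)
    (N : ℕ) (hN : N = 2 ^ L * m)
    (nb : ℕ → ℕ) (nbad nbmax : ℕ)
    (hnb : ∀ l, 2 ≤ l → l ≤ L → nb l ≤ nbmax) (hnbad : nbad ≤ nbmax)
    (Np : ℕ)
    (hNp : Np = (∑ l ∈ Finset.Icc 2 L,
        (N * r + K * 2 ^ l * r ^ 2 * (2 * nb l + 1) + 2 ^ l * r * (N / 2 ^ l)))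
      + K * 2 ^ L * m ^ 2 * (2 * nbad + 1)) :
    Np ≤ 2 * L * N * r + K * 2 ^ (L + 1) * r ^ 2 * (2 * nbmax + 1)
        + N * K * m * (2 * nbad + 1) ∧
    ((2 * L * N * r + K * 2 ^ (L + 1) * r ^ 2 * (2 * nbmax + 1)
        + N * K * m * (2 * nbad + 1) : ℝ)
      ≤ 2 * N * Real.logb 2 N * r + 3 * N * K * m * (2 * nbmax + 1)) := by
  have hinterp := sum_Icc_mul_div_pow_eq (hN ▸ dvd_mul_right (2 ^ L) m) 2 r
  have hkernel := sum_Icc_kernel_weights_le K r L nbmax nb hnb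
  have hadjacent : K * 2 ^ L * m ^ 2 * (2 * nbad + 1) = N * K * m * (2 * nbad + 1) := by
    rw [hN]; ring
  have hlevel : (L + 1 - 2) * (N * r) ≤ L * N * r := by
    rw [mul_assoc]; exact Nat.mul_le_mul_right _ (by omega)
  have hlog : (L : ℝ) ≤ logb 2 N := by
    rw [hN]; push_cast; exact le_logb_pow_mul one_lt_two L (by exact_mod_cast hm)
  have hkernel_le : K * 2 ^ (L + 1) * r ^ 2 * (2 * nbmax + 1) ≤ 2 * N * K * m * (2 * nbmax + 1) :=
    calc K * 2 ^ (L + 1) * r ^ 2 * (2 * nbmax + 1) ≤ K * 2 ^ (L + 1) * m ^ 2 * (2 * nbmax + 1) := by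
          gcongr
      _ = 2 * N * K * m * (2 * nbmax + 1) := by rw [hN]; ring
  have hadjacent_le : N * K * m * (2 * nbad + 1) ≤ N * K * m * (2 * nbmax + 1) := by gcongr
  refine ⟨?_, ?_⟩
  · rw [hNp, sum_add_distrib, sum_add_distrib, sum_const, Nat.card_Icc, smul_eq_mul, hinterp,
      hadjacent]
    linarith
  · have hlogN : (2 * L * N * r : ℝ) ≤ 2 * N * logb 2 N * r := by
      have : (0 : ℝ) ≤ N * r := by positivity
      nlinarith
    have hrest : (K * 2 ^ (L + 1) * r ^ 2 * (2 * nbmax + 1) + N * K * m * (2 * nbad + 1) : ℝ)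
        ≤ 3 * N * K * m * (2 * nbmax + 1) := by
      exact_mod_cast (add_le_add hkernel_le hadjacent_le).trans_eq (by ring)
    linarith

/-- Parameter count of the multiscale neural network with `K` kernel layers per level:
`N_p^MNN = Σ_{ℓ=2}^{L} (N·r + K·2^ℓ·r²·(2n_b^(ℓ)+1) + 2^ℓ·r·(N/2^ℓ)) + K·2^L·m²·(2n_b^(ad)+1)`
satisfies
`N_p^MNN ≤ 2LNr + K·2^{L+1}r²(2n_b+1) + NKm(2n_b^(ad)+1) ≤ 2N·log₂(N)·r + 3NKm(2n_b+1)`. -/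
theorem stmt_9 (L m r K : ℕ) (hL : 2 ≤ L) (hm : 1 ≤ m) (hr : 1 ≤ r) (hrm : r ≤ m) (hK : 1 ≤ K)
    (N : ℕ) (hN : N = 2 ^ L * m)
    (nb : ℕ → ℕ) (nbad nbmax : ℕ)
    (hnb : ∀ l, 2 ≤ l → l ≤ L → nb l ≤ nbmax) (hnbad : nbad ≤ nbmax)
    (Np : ℕ)
    (hNp : Np = (∑ l ∈ Finset.Icc 2 L,
        (N * r + K * 2 ^ l * r ^ 2 * (2 * nb l + 1) + 2 ^ l * r * (N / 2 ^ l)))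
      + K * 2 ^ L * m ^ 2 * (2 * nbad + 1)) :
    Np ≤ 2 * L * N * r + K * 2 ^ (L + 1) * r ^ 2 * (2 * nbmax + 1)
        + N * K * m * (2 * nbad + 1) ∧
    ((2 * L * N * r + K * 2 ^ (L + 1) * r ^ 2 * (2 * nbmax + 1)
        + N * K * m * (2 * nbad + 1) : ℝ)
      ≤ 2 * N * Real.logb 2 N * r + 3 * N * K * m * (2 * nbmax + 1)) :=
  stmt_9_general L m r K hm hrm N hN nb nbad nbmax hnb hnbad Np hNp
end
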